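/- arXiv:0707.4588 — 2 statements merged into one kernel-verified Lean document; each statement's English description precedes it below -/
import Mathlib

section
/- Let L > 0 and let (a_k)_{k≥0} be real numbers with Σ_k k⁸·a_k² < ∞ such that at least two of the a_k are nonzero. Define r(δ) = Σ_{k≥0} a_k²·cos(2πkδ/L) and for δ > 0 let C(δ) be the symmetric 3×3 matrix with rows (r(0), r(δ/2), r(δ)), (r(δ/2), r(0), r(δ/2)), (r(δ), r(δ/2), r(0)). Then for all sufficiently small δ > 0 the smallest eigenvalue λ₁(δ) of C(δ) is simple, and there is a choice of unit eigenvector v₁(δ) of C(δ) for λ₁(δ) such that v₁(δ) → (1,−2,1)ᵗ/√6 as δ → 0⁺. -/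
open Real Filter Topology
open scoped Matrix

/-!
`C(δ)` commutes with the reversal of coordinates: it has the antisymmetric eigenvector
`(1, 0, -1)` with eigenvalue `r(0) - r(δ)`, and on vectors `(x, y, x)` its eigenvalues are
`(2 r(0) + r(δ) ± √(r(δ)² + 8 r(δ/2)²)) / 2`. The smaller one is the strict minimum of the
spectrum as soon as `r(δ) < |r(δ/2)|`. For small `δ > 0` this follows from the termwise identity
`cos x - cos 2x = 3 (1 - cos x) - 2 (1 - cos x)²`, which gives
`r(δ/2) - r(δ) ≥ (3/8) c₂ δ² - (1/8) c₄ δ⁴` with `c_j = ∑ a_k² (2πk/L)^j` and `c₂ > 0`.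
For `β = r(δ/2)`, `γ = r(δ)` the eigenspace is spanned by `(2β, -(γ + √(γ² + 8β²)), 2β)`, which is
continuous in `(β, γ)` and equals `2 r(0) • (1, -2, 1)` at `β = γ = r(0) > 0`.
-/

lemma exists_ne_and_ne_zero {α M : Type*} [Zero M] {f : α → M}
    (h : ∃ a b, a ≠ b ∧ f a ≠ 0 ∧ f b ≠ 0) (c : α) : ∃ a, a ≠ c ∧ f a ≠ 0 := by
  obtain ⟨a, b, hab, ha, hb⟩ := h
  rcases eq_or_ne a c with rfl | hac
  · exact ⟨b, hab.symm, hb⟩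
  · exact ⟨a, hac, ha⟩

lemma sq_div_two_sub_pow_four_div_two_le_one_sub_cos (x : ℝ) :
    x ^ 2 / 2 - x ^ 4 / 2 ≤ 1 - cos x := by
  rcases le_or_gt |x| 1 with hx | hx
  · have h := (abs_le.1 (cos_bound hx)).2
    rw [(by decide : Even 4).pow_abs] at h
    nlinarith [pow_nonneg (sq_nonneg x) 2]
  · have : 1 < x ^ 2 := (one_lt_sq_iff_one_lt_abs x).2 hx
    nlinarith [cos_le_one x]

lemma cos_sub_cos_two_mul_bound (x : ℝ) : 3 * x ^ 2 / 2 - 2 * x ^ 4 ≤ cos x - cos (2 * x) := by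
  have hlow := sq_div_two_sub_pow_four_div_two_le_one_sub_cos x
  have hup := one_sub_sq_div_two_le_cos (x := x)
  have hsq : (1 - cos x) ^ 2 ≤ (x ^ 2 / 2) ^ 2 :=
    pow_le_pow_left₀ (sub_nonneg.2 (cos_le_one x)) (by linarith) 2
  rw [cos_two_mul]
  nlinarith

lemma summable_pow_mul_of_le {f : ℕ → ℝ} (hf : ∀ k, 0 ≤ f k) {m n : ℕ} (hnm : n ≤ m)
    (h : Summable fun k : ℕ => (k : ℝ) ^ m * f k) :
    Summable fun k : ℕ => (k : ℝ) ^ n * f k := by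
  refine h.of_norm_bounded_eventually_nat (eventually_atTop.2 ⟨1, fun k hk => ?_⟩)
  rw [Real.norm_of_nonneg (mul_nonneg (by positivity) (hf k))]
  exact mul_le_mul_of_nonneg_right (pow_le_pow_right₀ (by exact_mod_cast hk) hnm) (hf k)

lemma summable_mul_const_mul_pow_of_le {f : ℕ → ℝ} (hf : ∀ k, 0 ≤ f k) {m n : ℕ} (hnm : n ≤ m)
    (h : Summable fun k : ℕ => (k : ℝ) ^ m * f k) (c : ℝ) :
    Summable fun k : ℕ => f k * (c * k) ^ n :=
  ((summable_pow_mul_of_le hf hnm h).mul_left (c ^ n)).congr fun k => by ring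

noncomputable def cosSeries (w ω : ℕ → ℝ) (t : ℝ) : ℝ := ∑' k, w k * cos (ω k * t)

lemma norm_mul_cos_le (c x : ℝ) : ‖c * cos x‖ ≤ ‖c‖ := by
  rw [norm_mul]
  exact mul_le_of_le_one_right (norm_nonneg _) (abs_cos_le_one _)

section CosSeries

variable {w ω : ℕ → ℝ}

lemma continuous_cosSeries (hw : Summable w) : Continuous (cosSeries w ω) :=
  continuous_tsum (fun k => by fun_prop) hw.norm fun k t => norm_mul_cos_le _ _

lemma cosSeries_zero_pos (hw : ∀ k, 0 ≤ w k) (h0 : Summable w) {k : ℕ} (hk : w k ≠ 0) :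
    0 < cosSeries w ω 0 := by
  simpa [cosSeries] using h0.tsum_pos hw k ((hw k).lt_of_ne' hk)

lemma cosSeries_half_sub_cosSeries_bound (hw : ∀ k, 0 ≤ w k) (h0 : Summable w)
    (h2 : Summable fun k => w k * ω k ^ 2) (h4 : Summable fun k => w k * ω k ^ 4) (t : ℝ) :
    3 / 8 * t ^ 2 * ∑' k, w k * ω k ^ 2 - 1 / 8 * t ^ 4 * ∑' k, w k * ω k ^ 4 ≤
      cosSeries w ω (t / 2) - cosSeries w ω t := by
  have hcos (t : ℝ) : Summable fun k => w k * cos (ω k * t) :=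
    h0.norm.of_norm_bounded fun k => norm_mul_cos_le _ _
  refine hasSum_le (fun k => ?_) ((h2.hasSum.mul_left _).sub (h4.hasSum.mul_left _))
    ((hcos _).hasSum.sub (hcos _).hasSum)
  have h := mul_le_mul_of_nonneg_left (cos_sub_cos_two_mul_bound (ω k * (t / 2))) (hw k)
  rw [show 2 * (ω k * (t / 2)) = ω k * t by ring] at h
  linear_combination h

lemma eventually_cosSeries_lt_cosSeries_half (hw : ∀ k, 0 ≤ w k) (h0 : Summable w)
    (h4 : Summable fun k => w k * ω k ^ 4) {k : ℕ} (hwk : w k ≠ 0) (hωk : ω k ≠ 0) :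
    ∀ᶠ t in 𝓝[>] 0, cosSeries w ω t < cosSeries w ω (t / 2) := by
  have h2 : Summable fun k => w k * ω k ^ 2 :=
    (h0.add h4).of_nonneg_of_le (fun k => mul_nonneg (hw k) (sq_nonneg _)) fun k => by
      nlinarith [hw k, mul_nonneg (hw k) (sq_nonneg (ω k ^ 2 - 1))]
  have hc2 : 0 < ∑' k, w k * ω k ^ 2 :=
    h2.tsum_pos (fun k => mul_nonneg (hw k) (sq_nonneg _)) k
      (mul_pos ((hw k).lt_of_ne' hwk) (sq_pos_of_ne_zero hωk))
  have hsmall : ∀ᶠ t in 𝓝[>] (0 : ℝ),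
      1 / 8 * t ^ 2 * ∑' k, w k * ω k ^ 4 < 3 / 8 * ∑' k, w k * ω k ^ 2 :=
    nhdsWithin_le_nhds <| (Continuous.tendsto (by fun_prop) 0).eventually
      (gt_mem_nhds (by simpa using hc2))
  filter_upwards [hsmall, self_mem_nhdsWithin] with t ht (htpos : 0 < t)
  nlinarith [cosSeries_half_sub_cosSeries_bound hw h0 h2 h4 t, pow_pos htpos 2]

end CosSeries

noncomputable def unitize {ι : Type*} [Fintype ι] (u : ι → ℝ) : ι → ℝ :=
  (√(∑ i, u i ^ 2))⁻¹ • u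

section Unitize

variable {ι : Type*} [Fintype ι] {u : ι → ℝ}

lemma sqrt_sum_sq_smul_unitize (u : ι → ℝ) : √(∑ i, u i ^ 2) • unitize u = u := by
  rcases eq_or_ne √(∑ i, u i ^ 2) 0 with h | h
  · rw [Real.sqrt_eq_zero (by positivity),
      Finset.sum_eq_zero_iff_of_nonneg (fun i _ => sq_nonneg _)] at h
    ext i
    simp [unitize, (pow_eq_zero_iff two_ne_zero).1 (h i (Finset.mem_univ i))]
  · rw [unitize, smul_smul, mul_inv_cancel₀ h, one_smul]

lemma sum_sq_unitize (hu : u ≠ 0) : ∑ i, unitize u i ^ 2 = 1 := by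
  have hpos : 0 < ∑ i, u i ^ 2 := by
    obtain ⟨i, hi⟩ := Function.ne_iff.1 hu
    exact Finset.sum_pos' (fun j _ => sq_nonneg _) ⟨i, Finset.mem_univ _, sq_pos_of_ne_zero hi⟩
  simp only [unitize, Pi.smul_apply, smul_eq_mul, mul_pow, ← Finset.mul_sum, inv_pow,
    sq_sqrt hpos.le, inv_mul_cancel₀ hpos.ne']

lemma continuousAt_unitize (hu : u ≠ 0) : ContinuousAt unitize u := by
  have hpos : √(∑ i, u i ^ 2) ≠ 0 := fun h =>
    hu (by simpa [h] using (sqrt_sum_sq_smul_unitize u).symm)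
  exact ((continuous_finsetSum _ fun i _ => (continuous_apply i).pow 2).sqrt.continuousAt.inv₀
    hpos).smul continuousAt_id

end Unitize

lemma sum_sq_vec3 (x y z : ℝ) : ∑ i, ![x, y, z] i ^ 2 = x ^ 2 + y ^ 2 + z ^ 2 :=
  Fin.sum_univ_three _

def toeplitz3 (s β γ : ℝ) : Matrix (Fin 3) (Fin 3) ℝ :=
  !![s, β, γ; β, s, β; γ, β, s]

namespace toeplitz3

variable {s β γ : ℝ}

noncomputable def sqrtDisc (β γ : ℝ) : ℝ := √(γ ^ 2 + 8 * β ^ 2)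

noncomputable def minEigenvalue (s β γ : ℝ) : ℝ := (2 * s + γ - sqrtDisc β γ) / 2

noncomputable def minEigenvector (β γ : ℝ) : Fin 3 → ℝ := ![2 * β, -(γ + sqrtDisc β γ), 2 * β]

lemma sqrtDisc_nonneg (β γ : ℝ) : 0 ≤ sqrtDisc β γ := sqrt_nonneg _

lemma sqrtDisc_sq (β γ : ℝ) : sqrtDisc β γ ^ 2 = γ ^ 2 + 8 * β ^ 2 := sq_sqrt (by positivity)

lemma three_mul_le_sqrtDisc (h : γ ≤ |β|) : 3 * γ ≤ sqrtDisc β γ := by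
  rcases le_or_gt γ 0 with hγ | hγ
  · linarith [sqrtDisc_nonneg β γ]
  · exact le_sqrt_of_sq_le (by nlinarith [sq_abs β, abs_nonneg β])

lemma three_mul_lt_sqrtDisc (h : γ < |β|) : 3 * γ < sqrtDisc β γ := by
  rcases lt_or_ge γ 0 with hγ | hγ
  · linarith [sqrtDisc_nonneg β γ]
  · exact lt_sqrt_of_sq_lt (by nlinarith [sq_abs β, abs_nonneg β])

lemma mulVec_eq (w : Fin 3 → ℝ) :
    toeplitz3 s β γ *ᵥ w = ![s * w 0 + β * w 1 + γ * w 2, β * w 0 + s * w 1 + β * w 2,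
      γ * w 0 + β * w 1 + s * w 2] := by
  ext i; fin_cases i <;> simp [toeplitz3, Matrix.mulVec, dotProduct, Fin.sum_univ_three]

lemma mulVec_vec3 (x y z : ℝ) :
    toeplitz3 s β γ *ᵥ ![x, y, z] =
      ![s * x + β * y + γ * z, β * x + s * y + β * z, γ * x + β * y + s * z] :=
  mulVec_eq _

lemma sub_smul_one (μ : ℝ) : toeplitz3 s β γ - μ • 1 = toeplitz3 (s - μ) β γ := by
  ext i j; fin_cases i <;> fin_cases j <;> simp [toeplitz3]

lemma det_eq : (toeplitz3 s β γ).det = (s - γ) * ((s + γ) * s - 2 * β ^ 2) := by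
  simp only [toeplitz3, Matrix.det_fin_three, Matrix.of_apply, Matrix.cons_val',
    Matrix.cons_val_zero, Matrix.cons_val_fin_one, Matrix.cons_val_one, Matrix.cons_val]
  ring

lemma mulVec_minEigenvector :
    toeplitz3 s β γ *ᵥ minEigenvector β γ = minEigenvalue s β γ • minEigenvector β γ := by
  rw [minEigenvector, mulVec_vec3, Matrix.smul_vec3]
  refine Matrix.vec3_eq ?_ ?_ ?_ <;> rw [smul_eq_mul, minEigenvalue]
  · ring
  · linear_combination (-1 / 2 : ℝ) * sqrtDisc_sq β γ
  · ring

lemma minEigenvalue_le_of_mulVec_eq (h : γ ≤ |β|) {μ : ℝ} {w : Fin 3 → ℝ} (hw : w ≠ 0)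
    (hμ : toeplitz3 s β γ *ᵥ w = μ • w) : minEigenvalue s β γ ≤ μ := by
  have hdet : (toeplitz3 (s - μ) β γ).det = 0 := by
    refine Matrix.exists_mulVec_eq_zero_iff.1 ⟨w, hw, ?_⟩
    rw [← sub_smul_one, Matrix.sub_mulVec, hμ, Matrix.smul_mulVec, Matrix.one_mulVec, sub_self]
  have hfactor : (toeplitz3 (s - μ) β γ).det = (s - γ - μ) * (μ - minEigenvalue s β γ) *
      (μ - (minEigenvalue s β γ + sqrtDisc β γ)) := by
    rw [det_eq, minEigenvalue]
    linear_combination (s - γ - μ) / 4 * sqrtDisc_sq β γ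
  have h3 := three_mul_le_sqrtDisc h
  have h0 := sqrtDisc_nonneg β γ
  rw [hfactor] at hdet
  rcases mul_eq_zero.1 hdet with hdet | hdet
  · rcases mul_eq_zero.1 hdet with hdet | hdet
    · rw [minEigenvalue]; linarith
    · linarith
  · linarith

lemma exists_eq_smul_minEigenvector (hβ : β ≠ 0) (h : γ < |β|) {w : Fin 3 → ℝ}
    (hw : toeplitz3 s β γ *ᵥ w = minEigenvalue s β γ • w) :
    ∃ c : ℝ, w = c • minEigenvector β γ := by
  rw [mulVec_eq, minEigenvalue] at hw
  have e0 : s * w 0 + β * w 1 + γ * w 2 = (2 * s + γ - sqrtDisc β γ) / 2 * w 0 := congrFun hw 0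
  have e1 : β * w 0 + s * w 1 + β * w 2 = (2 * s + γ - sqrtDisc β γ) / 2 * w 1 := congrFun hw 1
  have e2 : γ * w 0 + β * w 1 + s * w 2 = (2 * s + γ - sqrtDisc β γ) / 2 * w 2 := congrFun hw 2
  have h02 : w 2 = w 0 := by
    have : (sqrtDisc β γ - 3 * γ) * (w 0 - w 2) = 0 := by linear_combination 2 * (e0 - e2)
    linarith [(mul_eq_zero.1 this).resolve_left (by linarith [three_mul_lt_sqrtDisc h])]
  refine ⟨w 0 / (2 * β), funext fun i => ?_⟩
  fin_cases i
  · show w 0 = w 0 / (2 * β) * (2 * β)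
    field_simp
  · show w 1 = w 0 / (2 * β) * -(γ + sqrtDisc β γ)
    field_simp
    refine mul_left_cancel₀ hβ ?_
    rw [h02] at e1
    linear_combination (sqrtDisc β γ + γ) / 2 * e1 - w 1 / 4 * sqrtDisc_sq β γ
  · show w 2 = w 0 / (2 * β) * (2 * β)
    rw [h02]
    field_simp

lemma minEigenvector_ne_zero (hβ : β ≠ 0) : minEigenvector β γ ≠ 0 :=
  Function.ne_iff.2 ⟨0, by simpa [minEigenvector] using hβ⟩

lemma continuous_minEigenvector : Continuous fun p : ℝ × ℝ => minEigenvector p.1 p.2 :=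
  continuous_pi fun i => by fin_cases i <;> simp only [minEigenvector, sqrtDisc] <;> fun_prop

lemma unitize_minEigenvector_spec (hβ : β ≠ 0) (h : γ < |β|) :
    let v := unitize (minEigenvector β γ)
    toeplitz3 s β γ *ᵥ v = minEigenvalue s β γ • v ∧ v 0 ^ 2 + v 1 ^ 2 + v 2 ^ 2 = 1 ∧
      (∀ (μ : ℝ) (w : Fin 3 → ℝ), w ≠ 0 → toeplitz3 s β γ *ᵥ w = μ • w →
        minEigenvalue s β γ ≤ μ) ∧
      ∀ w : Fin 3 → ℝ, toeplitz3 s β γ *ᵥ w = minEigenvalue s β γ • w → ∃ c : ℝ, w = c • v := by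
  refine ⟨?_, ?_, fun μ w hw hμ => minEigenvalue_le_of_mulVec_eq h.le hw hμ, fun w hw => ?_⟩
  · rw [unitize, Matrix.mulVec_smul, mulVec_minEigenvector, smul_comm]
  · simpa [Fin.sum_univ_three] using sum_sq_unitize (minEigenvector_ne_zero (γ := γ) hβ)
  · obtain ⟨c, rfl⟩ := exists_eq_smul_minEigenvector hβ h hw
    exact ⟨c * √(∑ i, minEigenvector β γ i ^ 2), by rw [mul_smul, sqrt_sum_sq_smul_unitize]⟩

lemma unitize_minEigenvector_self (hs : 0 < s) :
    unitize (minEigenvector s s) = ![1 / √6, -2 / √6, 1 / √6] := by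
  have hd : sqrtDisc s s = 3 * s := by
    rw [sqrtDisc, show s ^ 2 + 8 * s ^ 2 = (3 * s) ^ 2 by ring, sqrt_sq (by positivity)]
  have hv : minEigenvector s s = ![2 * s, -(4 * s), 2 * s] := by
    rw [minEigenvector, hd, show s + 3 * s = 4 * s by ring]
  have hn : √((2 * s) ^ 2 + (-(4 * s)) ^ 2 + (2 * s) ^ 2) = 2 * s * √6 := by
    rw [sqrt_eq_iff_mul_self_eq_of_pos (by positivity)]
    linear_combination (4 * s ^ 2) * mul_self_sqrt (show (0 : ℝ) ≤ 6 by norm_num)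
  rw [hv, unitize, sum_sq_vec3, hn, Matrix.smul_vec3]
  refine Matrix.vec3_eq ?_ ?_ ?_ <;> rw [smul_eq_mul]
  · field_simp
  · field_simp; norm_num
  · field_simp

lemma tendsto_unitize_minEigenvector {α : Type*} {l : Filter α} {β γ : α → ℝ} (hs : 0 < s)
    (hβ : Tendsto β l (𝓝 s)) (hγ : Tendsto γ l (𝓝 s)) :
    Tendsto (fun x => unitize (minEigenvector (β x) (γ x))) l
      (𝓝 ![1 / √6, -2 / √6, 1 / √6]) := by
  rw [← unitize_minEigenvector_self hs]
  exact (continuousAt_unitize (minEigenvector_ne_zero hs.ne')).tendsto.comp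
    (continuous_minEigenvector.continuousAt.tendsto.comp (hβ.prodMk_nhds hγ))

end toeplitz3

open toeplitz3 in
/-- **Eigenvector asymptotics.** For the covariance matrix `C(δ)` of
`(u(x), u(x+δ/2), u(x+δ))` for a random `L`-periodic function with covariance function
`r`, for all sufficiently small `δ > 0` the smallest eigenvalue `λ₁(δ)` of `C(δ)` is
simple, and one may choose a unit eigenvector `v₁(δ)` for `λ₁(δ)` with
`v₁(δ) → (1, −2, 1)ᵗ/√6` as `δ → 0⁺`. -/
theorem covariance_eigenvector_asymptotics (L : ℝ) (hL : 0 < L) (a : ℕ → ℝ)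
    (hsum : Summable fun k : ℕ => (k : ℝ) ^ 8 * a k ^ 2)
    (hnz : ∃ k₁ k₂ : ℕ, k₁ ≠ k₂ ∧ a k₁ ≠ 0 ∧ a k₂ ≠ 0)
    (r : ℝ → ℝ) (hr : ∀ δ, r δ = ∑' k : ℕ, a k ^ 2 * Real.cos (2 * π * k * δ / L))
    (C : ℝ → Matrix (Fin 3) (Fin 3) ℝ)
    (hC : ∀ δ, C δ = !![r 0, r (δ / 2), r δ;
                       r (δ / 2), r 0, r (δ / 2);
                       r δ, r (δ / 2), r 0]) :
    ∃ δ₀ > (0 : ℝ), ∃ lam : ℝ → ℝ, ∃ v : ℝ → Fin 3 → ℝ,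
      (∀ δ ∈ Set.Ioo 0 δ₀,
        (C δ).mulVec (v δ) = lam δ • v δ ∧
        v δ 0 ^ 2 + v δ 1 ^ 2 + v δ 2 ^ 2 = 1 ∧
        (∀ (μ : ℝ) (w : Fin 3 → ℝ), w ≠ 0 → (C δ).mulVec w = μ • w → lam δ ≤ μ) ∧
        (∀ w : Fin 3 → ℝ, (C δ).mulVec w = lam δ • w → ∃ c : ℝ, w = c • v δ)) ∧
      Tendsto v (𝓝[>] (0 : ℝ))
        (𝓝 ![1 / Real.sqrt 6, -2 / Real.sqrt 6, 1 / Real.sqrt 6]) := by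
  obtain ⟨k, hk, hak⟩ := exists_ne_and_ne_zero hnz 0
  set ω : ℕ → ℝ := fun k => 2 * π / L * k
  have hr' : r = cosSeries (fun k => a k ^ 2) ω :=
    funext fun t => (hr t).trans (tsum_congr fun k => by simp only [ω]; ring_nf)
  have h0 : Summable fun k => a k ^ 2 := by
    simpa using summable_mul_const_mul_pow_of_le (fun k => sq_nonneg (a k)) (Nat.zero_le 8) hsum 1
  have h4 : Summable fun k => a k ^ 2 * ω k ^ 4 :=
    summable_mul_const_mul_pow_of_le (fun k => sq_nonneg (a k)) (by norm_num) hsum _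
  have hs : 0 < r 0 := hr' ▸ cosSeries_zero_pos (fun k => sq_nonneg (a k)) h0 (pow_ne_zero 2 hak)
  have hcont : Continuous r := hr' ▸ continuous_cosSeries h0
  have hγ : Tendsto r (𝓝[>] 0) (𝓝 (r 0)) := hcont.continuousAt.mono_left nhdsWithin_le_nhds
  have hβ : Tendsto (fun δ => r (δ / 2)) (𝓝[>] 0) (𝓝 (r 0)) :=
    ((hcont.comp (continuous_id.div_const 2)).tendsto' 0 _ (by simp)).mono_left nhdsWithin_le_nhds
  have hgap : ∀ᶠ δ in 𝓝[>] 0, r δ < r (δ / 2) := hr' ▸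
    eventually_cosSeries_lt_cosSeries_half (fun k => sq_nonneg (a k)) h0 h4
      (pow_ne_zero 2 hak) (by simp [ω, hk, hL.ne', pi_ne_zero])
  obtain ⟨δ₀, hδ₀, hδ⟩ :=
    (nhdsGT_basis (0 : ℝ)).eventually_iff.1 ((hβ.eventually (lt_mem_nhds hs)).and hgap)
  refine ⟨δ₀, hδ₀, fun δ => minEigenvalue (r 0) (r (δ / 2)) (r δ),
    fun δ => unitize (minEigenvector (r (δ / 2)) (r δ)), fun δ hδ' => ?_,
    tendsto_unitize_minEigenvector hs hβ hγ⟩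
  obtain ⟨hβpos, hγβ⟩ := hδ hδ'
  rw [hC δ]
  exact unitize_minEigenvector_spec hβpos.ne' (by rwa [abs_of_pos hβpos])
end

section
/- Let L > 0 and let (a_{k,ℓ})_{k,ℓ≥0} be real numbers with Σ_{k,ℓ} (k²+ℓ²)⁵·a_{k,ℓ}² < ∞, such that there exist indices with k₁,ℓ₁ ≥ 1 and a_{k₁,ℓ₁} ≠ 0 (so that A_{1,1} > 0). Define r(d₁,d₂) = Σ_{k,ℓ≥0} a_{k,ℓ}²·cos(2πkd₁/L)·cos(2πℓd₂/L), A_{p,q} = Σ_{k,ℓ≥0} k^{2p}·ℓ^{2q}·a_{k,ℓ}², and R_{p,q} = (2π/L)^{2p+2q}·A_{p,q}. For δ > 0 let C(δ) be the 4×4 matrix with entries C(δ)_{ij} = r(P_i − P_j), where P₁ = (0,0), P₂ = (δ,0), P₃ = (δ,δ), P₄ = (0,δ). Then as δ → 0⁺, det C(δ) = R_{0,0}·R_{0,1}·R_{1,0}·R_{1,1}·δ⁸ + O(δ⁹), and the smallest eigenvalue of C(δ) satisfies λ₁(δ) = (R_{1,1}/4)·δ⁴ + O(δ⁵), while the largest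 eigenvalue satisfies λ₄(δ) = 4·R_{0,0} + O(δ); moreover there is a choice of unit eigenvector v₁(δ) for λ₁(δ) with v₁(δ) → (1,−1,1,−1)ᵗ/2 as δ → 0⁺. -/
/-!
The covariance matrix of the four corners of a square is invariant under the Klein four-group of
symmetries of the square, so it is diagonalised by the characters of that group: its eigenvectors
are `(1, ±1, ±1, ±1)` and, writing `ξ = 2πk/L`, `η = 2πℓ/L`, its eigenvalues are the series
`∑ a_{k,ℓ}² (1 ± cos ξδ)(1 ± cos ηδ)`. Expanding `1 + cos x = 2 - x²/2 + …` and
`1 - cos x = x²/2 + O(x⁴)` termwise, uniformly thanks to the moment condition, these eigenvalues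
are `4R₀₀ + O(δ²)`, `R₀₁δ² + O(δ⁴)`, `R₁₀δ² + O(δ⁴)` and `R₁₁δ⁴/4 + O(δ⁶)`. This orders them
for small `δ`, and the determinant is their product.
-/

open Real Filter Topology Asymptotics Matrix

theorem abs_mul_sub_mul_le {α : Type*} [CommRing α] [LinearOrder α] [IsStrictOrderedRing α]
    (a b c d : α) : |a * b - c * d| ≤ |a - c| * |b| + |c| * |b - d| := by
  calc |a * b - c * d| = |(a - c) * b + c * (b - d)| := by ring_nf
    _ ≤ |a - c| * |b| + |c| * |b - d| := by
      rw [← abs_mul, ← abs_mul]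
      exact abs_add_le _ _

theorem abs_mul_sub_mul_le_mul {e u v w : ℝ} (he : 0 ≤ e) (h : |u - v| ≤ w) :
    |e * u - e * v| ≤ e * w := by
  rw [← mul_sub, abs_mul, abs_of_nonneg he]
  exact mul_le_mul_of_nonneg_left h he

namespace Real

theorem cos_le_one_sub_sq_div_two_add_pow_four_div {x : ℝ} (hx : 0 ≤ x) :
    cos x ≤ 1 - x ^ 2 / 2 + x ^ 4 / 24 := by
  let f (t : ℝ) : ℝ := 1 - t ^ 2 / 2 + t ^ 4 / 24 - cos t
  have hderiv (t : ℝ) : deriv f t = sin t - (t - t ^ 3 / 6) := by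
    simp (disch := fun_prop) [f]
    ring
  have hmono : MonotoneOn f (Set.Ici 0) := by
    apply monotoneOn_of_deriv_nonneg (convex_Ici 0) (by fun_prop) (by fun_prop)
    grind [sin_ge_sub_cube, interior_Ici]
  have h0 : f 0 ≤ f x := hmono (by simp) hx hx
  grind [cos_zero]

theorem abs_one_sub_cos_sub_sq_div_two_le (x : ℝ) : |1 - cos x - x ^ 2 / 2| ≤ x ^ 4 / 24 := by
  have h := cos_le_one_sub_sq_div_two_add_pow_four_div (abs_nonneg x)
  rw [cos_abs, sq_abs, Even.pow_abs (by decide)] at h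
  rw [abs_le]
  constructor <;> linarith [one_sub_sq_div_two_le_cos (x := x)]

theorem abs_one_sub_cos_le (x : ℝ) : |1 - cos x| ≤ x ^ 2 / 2 := by
  rw [abs_le]
  constructor <;> linarith [one_sub_sq_div_two_le_cos (x := x), cos_le_one x]

theorem abs_one_add_cos_le (x : ℝ) : |1 + cos x| ≤ 2 := by
  rw [abs_le]
  constructor <;> linarith [neg_one_le_cos x, cos_le_one x]

theorem abs_one_add_cos_sub_two_le (x : ℝ) : |1 + cos x - 2| ≤ x ^ 2 / 2 := by
  rw [show 1 + cos x - 2 = -(1 - cos x) by ring, abs_neg]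
  exact abs_one_sub_cos_le x

theorem abs_one_add_cos_mul_one_add_cos_sub_le (x y : ℝ) :
    |(1 + cos x) * (1 + cos y) - 2 * 2| ≤ x ^ 2 + y ^ 2 := by
  calc _ ≤ |1 + cos x - 2| * |1 + cos y| + |2| * |1 + cos y - 2| := abs_mul_sub_mul_le ..
    _ ≤ x ^ 2 / 2 * 2 + 2 * (y ^ 2 / 2) := by
      rw [abs_two]
      gcongr
      exacts [abs_one_add_cos_sub_two_le x, abs_one_add_cos_le y, abs_one_add_cos_sub_two_le y]
    _ = x ^ 2 + y ^ 2 := by ring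

theorem abs_one_add_cos_mul_one_sub_cos_sub_le (x y : ℝ) :
    |(1 + cos x) * (1 - cos y) - 2 * (y ^ 2 / 2)| ≤ x ^ 2 * y ^ 2 / 4 + y ^ 4 / 12 := by
  calc _ ≤ |1 + cos x - 2| * |1 - cos y| + |2| * |1 - cos y - y ^ 2 / 2| := abs_mul_sub_mul_le ..
    _ ≤ x ^ 2 / 2 * (y ^ 2 / 2) + 2 * (y ^ 4 / 24) := by
      rw [abs_two]
      gcongr
      exacts [abs_one_add_cos_sub_two_le x, abs_one_sub_cos_le y,
        abs_one_sub_cos_sub_sq_div_two_le y]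
    _ = x ^ 2 * y ^ 2 / 4 + y ^ 4 / 12 := by ring

theorem abs_one_sub_cos_mul_one_sub_cos_sub_le (x y : ℝ) :
    |(1 - cos x) * (1 - cos y) - x ^ 2 / 2 * (y ^ 2 / 2)| ≤
      (x ^ 4 * y ^ 2 + x ^ 2 * y ^ 4) / 48 := by
  calc _ ≤ |1 - cos x - x ^ 2 / 2| * |1 - cos y| + |x ^ 2 / 2| * |1 - cos y - y ^ 2 / 2| :=
        abs_mul_sub_mul_le ..
    _ ≤ x ^ 4 / 24 * (y ^ 2 / 2) + x ^ 2 / 2 * (y ^ 4 / 24) := by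
      rw [abs_of_nonneg (by positivity : 0 ≤ x ^ 2 / 2)]
      gcongr
      exacts [abs_one_sub_cos_sub_sq_div_two_le x, abs_one_sub_cos_le y,
        abs_one_sub_cos_sub_sq_div_two_le y]
    _ = (x ^ 4 * y ^ 2 + x ^ 2 * y ^ 4) / 48 := by ring

end Real

theorem Summable.mul_of_abs_le {ι : Type*} {e f : ι → ℝ} {C : ℝ} (he : Summable e)
    (hf : ∀ i, |f i| ≤ C) : Summable fun i => e i * f i :=
  .of_norm_bounded (he.abs.mul_right C) fun i => by
    rw [Real.norm_eq_abs, abs_mul]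
    exact mul_le_mul_of_nonneg_left (hf i) (abs_nonneg _)

theorem abs_sub_le_of_hasSum {ι : Type*} {f g h : ι → ℝ} {F G H : ℝ} (hf : HasSum f F)
    (hg : HasSum g G) (hh : HasSum h H) (hfgh : ∀ i, |f i - g i| ≤ h i) : |F - G| ≤ H :=
  abs_le.2 ⟨hasSum_le (fun i => (abs_le.1 (hfgh i)).1) hh.neg (hf.sub hg),
    hasSum_le (fun i => (abs_le.1 (hfgh i)).2) (hf.sub hg) hh⟩

theorem isBigO_of_abs_le_mul_pow {l : Filter ℝ} {f : ℝ → ℝ} {K : ℝ} {k : ℕ} (hk : Even k)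
    (h : ∀ δ, |f δ| ≤ K * δ ^ k) : f =O[l] fun δ => δ ^ k :=
  .of_bound K (.of_forall fun δ => by
    rw [norm_pow, Real.norm_eq_abs, Real.norm_eq_abs, hk.pow_abs]; exact h δ)

theorem isBigO_pow_pow_of_le {m n : ℕ} (h : m ≤ n) :
    (fun x : ℝ => x ^ n) =O[𝓝 0] fun x => x ^ m :=
  h.eq_or_lt.elim (fun h => h ▸ isBigO_refl _ _) fun h => (isLittleO_pow_pow h).isBigO

theorem isBigO_mul_sub_mul_pow {f g : ℝ → ℝ} {a b : ℝ} {m n k : ℕ}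
    (hf : (fun δ => f δ - a * δ ^ m) =O[𝓝 0] fun δ => δ ^ (m + k))
    (hg : (fun δ => g δ - b * δ ^ n) =O[𝓝 0] fun δ => δ ^ (n + k)) :
    (fun δ => f δ * g δ - a * b * δ ^ (m + n)) =O[𝓝 0] fun δ => δ ^ (m + n + k) := by
  have hg' : g =O[𝓝 0] fun δ => δ ^ n :=
    ((hg.trans (isBigO_pow_pow_of_le (n.le_add_right k))).add
      ((isBigO_refl _ _).const_mul_left b)).congr_left fun δ => by ring
  have h1 : (fun δ => (f δ - a * δ ^ m) * g δ) =O[𝓝 0] fun δ => δ ^ (m + n + k) :=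
    (hf.mul hg').congr_right fun δ => by ring
  have h2 : (fun δ => a * δ ^ m * (g δ - b * δ ^ n)) =O[𝓝 0] fun δ => δ ^ (m + n + k) :=
    (((isBigO_refl _ _).const_mul_left a).mul hg).congr_right fun δ => by ring
  exact (h1.add h2).congr_left fun δ => by ring

theorem eventually_lt_of_isBigO_pow {f g : ℝ → ℝ} {a b : ℝ} {m n k : ℕ} (hmn : m < n)
    (hk : 0 < k) (hb : 0 < b)
    (hf : (fun δ => f δ - a * δ ^ n) =O[𝓝 0] fun δ => δ ^ (n + k))
    (hg : (fun δ => g δ - b * δ ^ m) =O[𝓝 0] fun δ => δ ^ (m + k)) :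
    ∀ᶠ δ in 𝓝[>] 0, f δ < g δ := by
  have ho : (fun δ => g δ - f δ - b * δ ^ m) =o[𝓝 0] fun δ => δ ^ m := by
    have h1 := hg.trans_isLittleO (isLittleO_pow_pow (by omega : m < m + k))
    have h2 := hf.trans_isLittleO (isLittleO_pow_pow (by omega : m < n + k))
    have h3 := (isLittleO_pow_pow hmn).const_mul_left a
    exact ((h1.sub h2).sub h3).congr_left fun δ => by ring
  filter_upwards [(ho.mono nhdsWithin_le_nhds).def (half_pos hb), self_mem_nhdsWithin]
    with δ hδ (hpos : 0 < δ)
  rw [Real.norm_eq_abs, Real.norm_eq_abs, abs_of_pos (pow_pos hpos m)] at hδ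
  nlinarith [(abs_le.1 hδ).1, pow_pos hpos m]

/-- The covariance matrix of a field that is even in each coordinate, at the corners
`(0,0), (δ,0), (δ,δ), (0,δ)`: `a = r(0,0)`, `b = r(δ,0)`, `c = r(0,δ)`, `d = r(δ,δ)`. -/
def cornerMatrix {K : Type*} (a b c d : K) : Matrix (Fin 4) (Fin 4) K :=
  !![a, b, d, c; b, a, c, d; d, c, a, b; c, d, b, a]

section CornerMatrix

variable {K : Type*} (a b c d : K)

theorem det_cornerMatrix [CommRing K] :
    (cornerMatrix a b c d).det =
      (a + b + c + d) * (a + b - c - d) * (a - b + c - d) * (a - b - c + d) := by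
  rw [cornerMatrix, det_succ_row_zero, Fin.sum_univ_four]
  simp only [Nat.succ_eq_add_one, Nat.reduceAdd, Fin.isValue, Fin.coe_ofNat_eq_mod, Nat.zero_mod,
    pow_zero, of_apply, cons_val', cons_val_zero, cons_val_fin_one, one_mul, Fin.succAbove_zero,
    det_fin_three, submatrix_apply, Fin.succ_zero_eq_one, cons_val_one, Fin.succ_one_eq_two,
    cons_val, Fin.reduceSucc, Nat.one_mod, pow_one, neg_mul, Fin.succAbove, Fin.castSucc_zero,
    zero_lt_one, ↓reduceIte, Fin.castSucc_one, lt_self_iff_false, Fin.reduceCastSucc,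
    Fin.lt_one_iff, Fin.reduceEq, Nat.reduceMod, even_two, Even.neg_pow, one_pow, Fin.reduceLT,
    Nat.mod_succ]
  ring

theorem cornerMatrix_mulVec_const [CommRing K] (x : K) :
    cornerMatrix a b c d *ᵥ ![x, x, x, x] = (a + b + c + d) • ![x, x, x, x] := by
  ext i
  fin_cases i <;>
    simp only [cornerMatrix, mulVec, dotProduct, Fin.sum_univ_four, of_apply, cons_val',
      cons_val_fin_one, cons_val_zero, cons_val_one, cons_val, Fin.zero_eta, Fin.mk_one,
      Fin.reduceFinMk, Fin.isValue, Nat.succ_eq_add_one, Nat.reduceAdd, Pi.smul_apply,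
      smul_eq_mul] <;>
    ring

theorem cornerMatrix_mulVec_alternating [CommRing K] (x : K) :
    cornerMatrix a b c d *ᵥ ![x, -x, x, -x] = (a - b - c + d) • ![x, -x, x, -x] := by
  ext i
  fin_cases i <;>
    simp only [cornerMatrix, mulVec, dotProduct, Fin.sum_univ_four, of_apply, cons_val',
      cons_val_fin_one, cons_val_zero, cons_val_one, cons_val, Fin.zero_eta, Fin.mk_one,
      Fin.reduceFinMk, Fin.isValue, Nat.succ_eq_add_one, Nat.reduceAdd, Pi.smul_apply,
      smul_eq_mul] <;>
    ring

theorem eq_or_eq_of_cornerMatrix_mulVec_eq_smul [Field K] [CharZero K] {μ : K}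
    {w : Fin 4 → K} (hw : w ≠ 0) (h : cornerMatrix a b c d *ᵥ w = μ • w) :
    μ = a + b + c + d ∨ μ = a + b - c - d ∨ μ = a - b + c - d ∨ μ = a - b - c + d := by
  have e (i : Fin 4) : (cornerMatrix a b c d *ᵥ w) i = μ * w i := by rw [h]; rfl
  have e0 := e 0
  have e1 := e 1
  have e2 := e 2
  have e3 := e 3
  simp only [cornerMatrix, mulVec, dotProduct, Fin.isValue, of_apply, cons_val', cons_val_fin_one,
    cons_val_zero, Fin.sum_univ_four, cons_val_one, cons_val] at e0 e1 e2 e3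
  by_contra! hμ
  obtain ⟨h1, h2, h3, h4⟩ := hμ
  -- pairing with the characters `(1, ±1, ±1, ±1)` of the Klein four-group
  have cancel {ν s : K} (hν : μ ≠ ν) (h : (μ - ν) * s = 0) : s = 0 :=
    (mul_eq_zero.1 h).resolve_left (sub_ne_zero.2 hν)
  have s1 := cancel (s := w 0 + w 1 + w 2 + w 3) h1 (by linear_combination -(e0 + e1 + e2 + e3))
  have s2 := cancel (s := w 0 + w 1 - w 2 - w 3) h2 (by linear_combination -(e0 + e1 - e2 - e3))
  have s3 := cancel (s := w 0 - w 1 - w 2 + w 3) h3 (by linear_combination -(e0 - e1 - e2 + e3))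
  have s4 := cancel (s := w 0 - w 1 + w 2 - w 3) h4 (by linear_combination -(e0 - e1 + e2 - e3))
  refine hw (funext fun i => ?_)
  fin_cases i <;> simp only [Fin.zero_eta, Fin.mk_one, Fin.reduceFinMk, Pi.zero_apply]
  · linear_combination (s1 + s2 + s3 + s4) / 4
  · linear_combination (s1 + s2 - s3 - s4) / 4
  · linear_combination (s1 - s2 - s3 + s4) / 4
  · linear_combination (s1 - s2 + s3 - s4) / 4

end CornerMatrix

section SpectralSeries

variable {ι : Type*} (e ξ η : ι → ℝ)

/-- The covariance `r(s, t)` of the field, with `i = (k, ℓ)`, `eᵢ = a_{k,ℓ}²`, `ξᵢ = 2πk/L` and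
`ηᵢ = 2πℓ/L`; then `spectralMoment e ξ η p q` is `R_{p,q}`. -/
noncomputable def spectralCov (s t : ℝ) : ℝ := ∑' i, e i * (cos (ξ i * s) * cos (η i * t))

noncomputable def spectralMoment (p q : ℕ) : ℝ := ∑' i, e i * (ξ i ^ (2 * p) * η i ^ (2 * q))

noncomputable def cornerEigenvalue (σ τ δ : ℝ) : ℝ :=
  ∑' i, e i * ((1 + σ * cos (ξ i * δ)) * (1 + τ * cos (η i * δ)))

def HasMoments (N : ℕ) : Prop :=
  ∀ p q, p + q ≤ N → Summable fun i => e i * (ξ i ^ (2 * p) * η i ^ (2 * q))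

noncomputable def spectralCovMatrix (δ : ℝ) : Matrix (Fin 4) (Fin 4) ℝ :=
  cornerMatrix (spectralCov e ξ η 0 0) (spectralCov e ξ η δ 0) (spectralCov e ξ η 0 δ)
    (spectralCov e ξ η δ δ)

def squareCorners (δ : ℝ) : Fin 4 → ℝ × ℝ := ![(0, 0), (δ, 0), (δ, δ), (0, δ)]

variable {e ξ η}

theorem spectralCov_neg_left (s t : ℝ) : spectralCov e ξ η (-s) t = spectralCov e ξ η s t := by
  simp [spectralCov]

theorem spectralCov_neg_right (s t : ℝ) : spectralCov e ξ η s (-t) = spectralCov e ξ η s t := by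
  simp [spectralCov]

theorem spectralCovMatrix_apply (δ : ℝ) (i j : Fin 4) :
    spectralCovMatrix e ξ η δ i j =
      spectralCov e ξ η (squareCorners δ i - squareCorners δ j).1
        (squareCorners δ i - squareCorners δ j).2 := by
  fin_cases i <;> fin_cases j <;>
    simp [spectralCovMatrix, cornerMatrix, squareCorners, spectralCov_neg_left,
      spectralCov_neg_right]

theorem HasMoments.mono {M N : ℕ} (hm : HasMoments e ξ η N) (hMN : M ≤ N) :
    HasMoments e ξ η M :=
  fun p q hpq => hm p q (hpq.trans hMN)

theorem HasMoments.summable {N : ℕ} (hm : HasMoments e ξ η N) : Summable e := by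
  simpa using hm 0 0 N.zero_le

theorem HasMoments.swap {N : ℕ} (hm : HasMoments e ξ η N) : HasMoments e η ξ N :=
  fun p q hpq => by simpa only [mul_comm] using hm q p (by omega)

theorem spectralMoment_swap (p q : ℕ) : spectralMoment e η ξ p q = spectralMoment e ξ η q p := by
  simp only [spectralMoment, mul_comm]

theorem cornerEigenvalue_swap (σ τ δ : ℝ) :
    cornerEigenvalue e η ξ σ τ δ = cornerEigenvalue e ξ η τ σ δ := by
  simp only [cornerEigenvalue, mul_comm]

theorem spectralMoment_pos (he : ∀ i, 0 ≤ e i) {p q : ℕ}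
    (hs : Summable fun i => e i * (ξ i ^ (2 * p) * η i ^ (2 * q))) {i : ι}
    (hi : 0 < e i * (ξ i ^ (2 * p) * η i ^ (2 * q))) : 0 < spectralMoment e ξ η p q :=
  hs.tsum_pos (fun j => mul_nonneg (he j) (mul_nonneg (Even.pow_nonneg (even_two_mul p) _)
    (Even.pow_nonneg (even_two_mul q) _))) i hi

theorem hasSum_cornerEigenvalue (hs : Summable e) (σ τ δ : ℝ) :
    HasSum (fun i => e i * ((1 + σ * cos (ξ i * δ)) * (1 + τ * cos (η i * δ))))
      (spectralCov e ξ η 0 0 + σ * spectralCov e ξ η δ 0 + τ * spectralCov e ξ η 0 δ +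
        σ * τ * spectralCov e ξ η δ δ) := by
  have hcos (u v : ℝ) : |cos u * cos v| ≤ 1 := by
    rw [abs_mul]
    exact mul_le_one₀ (abs_cos_le_one u) (abs_nonneg _) (abs_cos_le_one v)
  have hb {f : ι → ℝ} (hf : ∀ i, |f i| ≤ 1) := (hs.mul_of_abs_le hf).hasSum
  have h := ((hs.hasSum.add ((hb fun i => abs_cos_le_one (ξ i * δ)).mul_left σ)).add
    ((hb fun i => abs_cos_le_one (η i * δ)).mul_left τ)).add
    ((hb fun i => hcos (ξ i * δ) (η i * δ)).mul_left (σ * τ))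
  simp only [spectralCov, mul_zero, cos_zero, mul_one, one_mul]
  convert h using 1
  funext i
  ring

theorem cornerEigenvalue_eq (hs : Summable e) (σ τ δ : ℝ) :
    cornerEigenvalue e ξ η σ τ δ = spectralCov e ξ η 0 0 + σ * spectralCov e ξ η δ 0 +
      τ * spectralCov e ξ η 0 δ + σ * τ * spectralCov e ξ η δ δ :=
  (hasSum_cornerEigenvalue hs σ τ δ).tsum_eq

theorem abs_cornerEigenvalue_one_one_sub_le (he : ∀ i, 0 ≤ e i) (hm : HasMoments e ξ η 1)
    (δ : ℝ) :
    |cornerEigenvalue e ξ η 1 1 δ - 4 * spectralMoment e ξ η 0 0| ≤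
      (spectralMoment e ξ η 1 0 + spectralMoment e ξ η 0 1) * δ ^ 2 := by
  refine abs_sub_le_of_hasSum (hasSum_cornerEigenvalue hm.summable 1 1 δ).summable.hasSum
    ((hm 0 0 (by norm_num)).hasSum.mul_left 4)
    (((hm 1 0 (by norm_num)).hasSum.add (hm 0 1 (by norm_num)).hasSum).mul_right _) fun i => ?_
  convert abs_mul_sub_mul_le_mul (he i)
    (abs_one_add_cos_mul_one_add_cos_sub_le (ξ i * δ) (η i * δ)) using 1
  · congr 1; ring
  · ring

theorem abs_cornerEigenvalue_one_neg_one_sub_le (he : ∀ i, 0 ≤ e i) (hm : HasMoments e ξ η 2)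
    (δ : ℝ) :
    |cornerEigenvalue e ξ η 1 (-1) δ - spectralMoment e ξ η 0 1 * δ ^ 2| ≤
      (spectralMoment e ξ η 1 1 / 4 + spectralMoment e ξ η 0 2 / 12) * δ ^ 4 := by
  refine abs_sub_le_of_hasSum (hasSum_cornerEigenvalue hm.summable 1 (-1) δ).summable.hasSum
    ((hm 0 1 (by norm_num)).hasSum.mul_right _)
    (((hm 1 1 (by norm_num)).hasSum.div_const 4).add ((hm 0 2 (by norm_num)).hasSum.div_const 12)
      |>.mul_right _) fun i => ?_
  convert abs_mul_sub_mul_le_mul (he i)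
    (abs_one_add_cos_mul_one_sub_cos_sub_le (ξ i * δ) (η i * δ)) using 1
  · congr 1; ring
  · ring

theorem abs_cornerEigenvalue_neg_one_one_sub_le (he : ∀ i, 0 ≤ e i) (hm : HasMoments e ξ η 2)
    (δ : ℝ) :
    |cornerEigenvalue e ξ η (-1) 1 δ - spectralMoment e ξ η 1 0 * δ ^ 2| ≤
      (spectralMoment e ξ η 1 1 / 4 + spectralMoment e ξ η 2 0 / 12) * δ ^ 4 := by
  simpa only [cornerEigenvalue_swap, spectralMoment_swap] using
    abs_cornerEigenvalue_one_neg_one_sub_le he hm.swap δ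

theorem abs_cornerEigenvalue_neg_one_neg_one_sub_le (he : ∀ i, 0 ≤ e i)
    (hm : HasMoments e ξ η 3) (δ : ℝ) :
    |cornerEigenvalue e ξ η (-1) (-1) δ - spectralMoment e ξ η 1 1 / 4 * δ ^ 4| ≤
      (spectralMoment e ξ η 2 1 + spectralMoment e ξ η 1 2) / 48 * δ ^ 6 := by
  refine abs_sub_le_of_hasSum (hasSum_cornerEigenvalue hm.summable (-1) (-1) δ).summable.hasSum
    (((hm 1 1 (by norm_num)).hasSum.div_const 4).mul_right _)
    ((((hm 2 1 (by norm_num)).hasSum.add (hm 1 2 (by norm_num)).hasSum).div_const 48).mul_right _)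
    fun i => ?_
  convert abs_mul_sub_mul_le_mul (he i)
    (abs_one_sub_cos_mul_one_sub_cos_sub_le (ξ i * δ) (η i * δ)) using 1
  · congr 1; ring
  · ring

theorem isBigO_cornerEigenvalue_one_one (he : ∀ i, 0 ≤ e i) (hm : HasMoments e ξ η 1) :
    (fun δ => cornerEigenvalue e ξ η 1 1 δ - 4 * spectralMoment e ξ η 0 0) =O[𝓝 0]
      fun δ => δ ^ 2 :=
  isBigO_of_abs_le_mul_pow even_two (abs_cornerEigenvalue_one_one_sub_le he hm)

theorem isBigO_cornerEigenvalue_one_neg_one (he : ∀ i, 0 ≤ e i) (hm : HasMoments e ξ η 2) :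
    (fun δ => cornerEigenvalue e ξ η 1 (-1) δ - spectralMoment e ξ η 0 1 * δ ^ 2) =O[𝓝 0]
      fun δ => δ ^ 4 :=
  isBigO_of_abs_le_mul_pow (by decide) (abs_cornerEigenvalue_one_neg_one_sub_le he hm)

theorem isBigO_cornerEigenvalue_neg_one_one (he : ∀ i, 0 ≤ e i) (hm : HasMoments e ξ η 2) :
    (fun δ => cornerEigenvalue e ξ η (-1) 1 δ - spectralMoment e ξ η 1 0 * δ ^ 2) =O[𝓝 0]
      fun δ => δ ^ 4 :=
  isBigO_of_abs_le_mul_pow (by decide) (abs_cornerEigenvalue_neg_one_one_sub_le he hm)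

theorem isBigO_cornerEigenvalue_neg_one_neg_one (he : ∀ i, 0 ≤ e i) (hm : HasMoments e ξ η 3) :
    (fun δ => cornerEigenvalue e ξ η (-1) (-1) δ - spectralMoment e ξ η 1 1 / 4 * δ ^ 4) =O[𝓝 0]
      fun δ => δ ^ 6 :=
  isBigO_of_abs_le_mul_pow (by decide) (abs_cornerEigenvalue_neg_one_neg_one_sub_le he hm)

theorem det_spectralCovMatrix (hs : Summable e) (δ : ℝ) :
    (spectralCovMatrix e ξ η δ).det =
      cornerEigenvalue e ξ η 1 1 δ * cornerEigenvalue e ξ η 1 (-1) δ *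
        cornerEigenvalue e ξ η (-1) 1 δ * cornerEigenvalue e ξ η (-1) (-1) δ := by
  simp only [spectralCovMatrix, det_cornerMatrix, cornerEigenvalue_eq hs]
  ring

theorem spectralCovMatrix_mulVec_const (hs : Summable e) (δ x : ℝ) :
    spectralCovMatrix e ξ η δ *ᵥ ![x, x, x, x] = cornerEigenvalue e ξ η 1 1 δ • ![x, x, x, x] := by
  rw [spectralCovMatrix, cornerMatrix_mulVec_const, cornerEigenvalue_eq hs]
  ring_nf

theorem spectralCovMatrix_mulVec_alternating (hs : Summable e) (δ x : ℝ) :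
    spectralCovMatrix e ξ η δ *ᵥ ![x, -x, x, -x] =
      cornerEigenvalue e ξ η (-1) (-1) δ • ![x, -x, x, -x] := by
  rw [spectralCovMatrix, cornerMatrix_mulVec_alternating, cornerEigenvalue_eq hs]
  ring_nf

theorem eq_cornerEigenvalue_of_mulVec_eq_smul (hs : Summable e) {δ μ : ℝ} {w : Fin 4 → ℝ}
    (hw : w ≠ 0) (h : spectralCovMatrix e ξ η δ *ᵥ w = μ • w) :
    μ = cornerEigenvalue e ξ η 1 1 δ ∨ μ = cornerEigenvalue e ξ η 1 (-1) δ ∨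
      μ = cornerEigenvalue e ξ η (-1) 1 δ ∨ μ = cornerEigenvalue e ξ η (-1) (-1) δ := by
  simpa only [cornerEigenvalue_eq hs, one_mul, neg_one_mul, mul_neg, mul_one, neg_neg,
    ← sub_eq_add_neg] using eq_or_eq_of_cornerMatrix_mulVec_eq_smul _ _ _ _ hw h

theorem isBigO_det_spectralCovMatrix (he : ∀ i, 0 ≤ e i) (hm : HasMoments e ξ η 3) :
    (fun δ => (spectralCovMatrix e ξ η δ).det - spectralMoment e ξ η 0 0 *
      spectralMoment e ξ η 0 1 * spectralMoment e ξ η 1 0 * spectralMoment e ξ η 1 1 * δ ^ 8)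
      =O[𝓝 0] fun δ => δ ^ 10 := by
  have hA : (fun δ => cornerEigenvalue e ξ η 1 1 δ - 4 * spectralMoment e ξ η 0 0 * δ ^ 0)
      =O[𝓝 0] fun δ => δ ^ (0 + 2) := by
    simpa using isBigO_cornerEigenvalue_one_one he (hm.mono (by norm_num))
  have hAB := isBigO_mul_sub_mul_pow (k := 2) hA
    (isBigO_cornerEigenvalue_one_neg_one he (hm.mono (by norm_num)))
  have hABC := isBigO_mul_sub_mul_pow (k := 2) hAB
    (isBigO_cornerEigenvalue_neg_one_one he (hm.mono (by norm_num)))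
  refine (isBigO_mul_sub_mul_pow (k := 2) hABC
    (isBigO_cornerEigenvalue_neg_one_neg_one he hm)).congr (fun δ => ?_) fun δ => rfl
  rw [det_spectralCovMatrix hm.summable]
  ring

theorem eventually_eigenvalue_mem_Icc_spectralCovMatrix (he : ∀ i, 0 ≤ e i)
    (hm : HasMoments e ξ η 3) (h00 : 0 < spectralMoment e ξ η 0 0)
    (h01 : 0 < spectralMoment e ξ η 0 1) (h10 : 0 < spectralMoment e ξ η 1 0) :
    ∀ᶠ δ in 𝓝[>] 0, ∀ (μ : ℝ) (w : Fin 4 → ℝ), w ≠ 0 → spectralCovMatrix e ξ η δ *ᵥ w = μ • w →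
      μ ∈ Set.Icc (cornerEigenvalue e ξ η (-1) (-1) δ) (cornerEigenvalue e ξ η 1 1 δ) := by
  have hA : (fun δ => cornerEigenvalue e ξ η 1 1 δ - 4 * spectralMoment e ξ η 0 0 * δ ^ 0)
      =O[𝓝 0] fun δ => δ ^ (0 + 2) := by
    simpa using isBigO_cornerEigenvalue_one_one he (hm.mono (by norm_num))
  have hB := isBigO_cornerEigenvalue_one_neg_one he (hm.mono (by norm_num))
  have hC := isBigO_cornerEigenvalue_neg_one_one he (hm.mono (by norm_num))
  have hS := isBigO_cornerEigenvalue_neg_one_neg_one he hm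
  filter_upwards [eventually_lt_of_isBigO_pow (k := 2) (by norm_num) (by norm_num) h01 hS hB,
    eventually_lt_of_isBigO_pow (k := 2) (by norm_num) (by norm_num) h10 hS hC,
    eventually_lt_of_isBigO_pow (k := 2) (by norm_num) (by norm_num) (by positivity) hB hA,
    eventually_lt_of_isBigO_pow (k := 2) (by norm_num) (by norm_num) (by positivity) hC hA]
    with δ hSB hSC hBA hCA μ w hw h
  rcases eq_cornerEigenvalue_of_mulVec_eq_smul hm.summable hw h with rfl | rfl | rfl | rfl <;>
    constructor <;> linarith

theorem spectralCovMatrix_asymptotics (he : ∀ i, 0 ≤ e i) (hm : HasMoments e ξ η 3)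
    (h00 : 0 < spectralMoment e ξ η 0 0) (h01 : 0 < spectralMoment e ξ η 0 1)
    (h10 : 0 < spectralMoment e ξ η 1 0) :
    ((fun δ => (spectralCovMatrix e ξ η δ).det - spectralMoment e ξ η 0 0 *
      spectralMoment e ξ η 0 1 * spectralMoment e ξ η 1 0 * spectralMoment e ξ η 1 1 * δ ^ 8)
        =O[𝓝[>] (0 : ℝ)] fun δ => δ ^ 9) ∧
    ∃ δ₀ > (0 : ℝ), ∃ lam₁ lam₄ : ℝ → ℝ, ∃ v : ℝ → Fin 4 → ℝ,
      (∀ δ ∈ Set.Ioo 0 δ₀,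
        spectralCovMatrix e ξ η δ *ᵥ v δ = lam₁ δ • v δ ∧
        v δ 0 ^ 2 + v δ 1 ^ 2 + v δ 2 ^ 2 + v δ 3 ^ 2 = 1 ∧
        (∃ w : Fin 4 → ℝ, w ≠ 0 ∧ spectralCovMatrix e ξ η δ *ᵥ w = lam₄ δ • w) ∧
        (∀ (μ : ℝ) (w : Fin 4 → ℝ), w ≠ 0 → spectralCovMatrix e ξ η δ *ᵥ w = μ • w →
          lam₁ δ ≤ μ ∧ μ ≤ lam₄ δ)) ∧
      ((fun δ => lam₁ δ - spectralMoment e ξ η 1 1 / 4 * δ ^ 4) =O[𝓝[>] (0 : ℝ)]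
        fun δ => δ ^ 5) ∧
      ((fun δ => lam₄ δ - 4 * spectralMoment e ξ η 0 0) =O[𝓝[>] (0 : ℝ)] fun δ => δ) ∧
      Tendsto v (𝓝[>] (0 : ℝ)) (𝓝 ![1 / 2, -(1 / 2), 1 / 2, -(1 / 2)]) := by
  obtain ⟨δ₀, hδ₀, hIoo⟩ := mem_nhdsGT_iff_exists_Ioo_subset.1
    (eventually_eigenvalue_mem_Icc_spectralCovMatrix he hm h00 h01 h10)
  have hS := (isBigO_cornerEigenvalue_neg_one_neg_one he hm).trans
    (isBigO_pow_pow_of_le (by norm_num : 5 ≤ 6))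
  have hA := (isBigO_cornerEigenvalue_one_one he (hm.mono (by norm_num))).trans
    ((isBigO_pow_pow_of_le (by norm_num : 1 ≤ 2)).congr_right fun δ => pow_one δ)
  refine ⟨((isBigO_det_spectralCovMatrix he hm).trans
      (isBigO_pow_pow_of_le (by norm_num))).mono nhdsWithin_le_nhds, δ₀, hδ₀,
    cornerEigenvalue e ξ η (-1) (-1), cornerEigenvalue e ξ η 1 1,
    fun _ => ![1 / 2, -(1 / 2), 1 / 2, -(1 / 2)],
    fun δ hδ => ⟨?_, by norm_num [cons_val_two, cons_val_three], ?_, hIoo hδ⟩,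
    hS.mono nhdsWithin_le_nhds, hA.mono nhdsWithin_le_nhds, tendsto_const_nhds⟩
  · exact spectralCovMatrix_mulVec_alternating hm.summable δ _
  · exact ⟨![1, 1, 1, 1], by simp, spectralCovMatrix_mulVec_const hm.summable δ 1⟩

end SpectralSeries

theorem hasMoments_of_summable_sq_add_sq_pow_mul {w : ℕ × ℕ → ℝ} (hw : ∀ p, 0 ≤ w p) (ω : ℝ) {N : ℕ}
    (h : Summable fun p : ℕ × ℕ => ((p.1 : ℝ) ^ 2 + (p.2 : ℝ) ^ 2) ^ N * w p) :
    HasMoments w (fun p => ω * p.1) (fun p => ω * p.2) N := by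
  intro p q hpq
  have hs : Summable fun k : ℕ × ℕ => w k * ((k.1 : ℝ) ^ (2 * p) * (k.2 : ℝ) ^ (2 * q)) := by
    refine h.of_norm_bounded_eventually ?_
    filter_upwards [(Set.finite_singleton (0 : ℕ × ℕ)).compl_mem_cofinite] with k hk
    have hk1 : (1 : ℝ) ≤ (k.1 : ℝ) ^ 2 + (k.2 : ℝ) ^ 2 := by
      have : k.1 ^ 2 + k.2 ^ 2 ≠ 0 := by simpa [Prod.ext_iff] using hk
      exact_mod_cast Nat.one_le_iff_ne_zero.2 this
    rw [Real.norm_eq_abs, abs_of_nonneg (by have := hw k; positivity), mul_comm]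
    refine mul_le_mul_of_nonneg_right ?_ (hw k)
    calc (k.1 : ℝ) ^ (2 * p) * (k.2 : ℝ) ^ (2 * q) = ((k.1 : ℝ) ^ 2) ^ p * ((k.2 : ℝ) ^ 2) ^ q := by
          rw [pow_mul, pow_mul]
      _ ≤ ((k.1 : ℝ) ^ 2 + (k.2 : ℝ) ^ 2) ^ p * ((k.1 : ℝ) ^ 2 + (k.2 : ℝ) ^ 2) ^ q := by
          gcongr <;> nlinarith
      _ ≤ ((k.1 : ℝ) ^ 2 + (k.2 : ℝ) ^ 2) ^ N := by
          rw [← pow_add]; exact pow_le_pow_right₀ hk1 hpq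
  exact (hs.mul_left (ω ^ (2 * p + 2 * q))).congr fun k => by ring

/-- **Spectral asymptotics of the 4×4 covariance matrix in 2D.** For the covariance
matrix `C(δ)_{ij} = r(P_i − P_j)` of the values of a doubly periodic Gaussian random
field at the corners `P₁ = (0,0)`, `P₂ = (δ,0)`, `P₃ = (δ,δ)`, `P₄ = (0,δ)` of a square,
one has `det C(δ) = R_{0,0}R_{0,1}R_{1,0}R_{1,1}δ⁸ + O(δ⁹)`, the smallest eigenvalue
satisfies `λ₁(δ) = (R_{1,1}/4)δ⁴ + O(δ⁵)`, the largest satisfies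
`λ₄(δ) = 4R_{0,0} + O(δ)`, and a unit eigenvector `v₁(δ)` for `λ₁(δ)` can be chosen with
`v₁(δ) → (1,−1,1,−1)ᵗ/2` as `δ → 0⁺`. -/
theorem covariance_asymptotics_two_dim (L : ℝ) (hL : 0 < L) (a : ℕ → ℕ → ℝ)
    (hsum : Summable fun p : ℕ × ℕ =>
      ((p.1 : ℝ) ^ 2 + (p.2 : ℝ) ^ 2) ^ 5 * a p.1 p.2 ^ 2)
    (hnz : ∃ k₁ l₁ : ℕ, 1 ≤ k₁ ∧ 1 ≤ l₁ ∧ a k₁ l₁ ≠ 0)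
    (r : ℝ × ℝ → ℝ) (hr : ∀ d, r d = ∑' p : ℕ × ℕ, a p.1 p.2 ^ 2 *
      Real.cos (2 * π * p.1 * d.1 / L) * Real.cos (2 * π * p.2 * d.2 / L))
    (A : ℕ → ℕ → ℝ) (hA : ∀ p q, A p q =
      ∑' kl : ℕ × ℕ, (kl.1 : ℝ) ^ (2 * p) * (kl.2 : ℝ) ^ (2 * q) * a kl.1 kl.2 ^ 2)
    (R : ℕ → ℕ → ℝ) (hR : ∀ p q, R p q = (2 * π / L) ^ (2 * p + 2 * q) * A p q)
    (Pt : ℝ → Fin 4 → ℝ × ℝ)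
    (hPt : ∀ δ, Pt δ = ![(0, 0), (δ, 0), (δ, δ), (0, δ)])
    (C : ℝ → Matrix (Fin 4) (Fin 4) ℝ)
    (hC : ∀ δ i j, C δ i j = r (Pt δ i - Pt δ j)) :
    ((fun δ => (C δ).det - R 0 0 * R 0 1 * R 1 0 * R 1 1 * δ ^ 8)
        =O[𝓝[>] (0 : ℝ)] fun δ => δ ^ 9) ∧
    ∃ δ₀ > (0 : ℝ), ∃ lam₁ lam₄ : ℝ → ℝ, ∃ v : ℝ → Fin 4 → ℝ,
      (∀ δ ∈ Set.Ioo 0 δ₀,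
        (C δ).mulVec (v δ) = lam₁ δ • v δ ∧
        v δ 0 ^ 2 + v δ 1 ^ 2 + v δ 2 ^ 2 + v δ 3 ^ 2 = 1 ∧
        (∃ w : Fin 4 → ℝ, w ≠ 0 ∧ (C δ).mulVec w = lam₄ δ • w) ∧
        (∀ (μ : ℝ) (w : Fin 4 → ℝ), w ≠ 0 → (C δ).mulVec w = μ • w →
          lam₁ δ ≤ μ ∧ μ ≤ lam₄ δ)) ∧
      ((fun δ => lam₁ δ - R 1 1 / 4 * δ ^ 4) =O[𝓝[>] (0 : ℝ)] fun δ => δ ^ 5) ∧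
      ((fun δ => lam₄ δ - 4 * R 0 0) =O[𝓝[>] (0 : ℝ)] fun δ => δ) ∧
      Tendsto v (𝓝[>] (0 : ℝ))
        (𝓝 ![1 / 2, -(1 / 2), 1 / 2, -(1 / 2)]) := by
  set ω := 2 * π / L
  set e : ℕ × ℕ → ℝ := fun p => a p.1 p.2 ^ 2
  set ξ : ℕ × ℕ → ℝ := fun p => ω * p.1
  set η : ℕ × ℕ → ℝ := fun p => ω * p.2
  have he (p : ℕ × ℕ) : 0 ≤ e p := sq_nonneg _
  have hm : HasMoments e ξ η 5 := hasMoments_of_summable_sq_add_sq_pow_mul he ω hsum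
  obtain rfl : R = spectralMoment e ξ η := by
    ext p q
    rw [hR, hA, spectralMoment, ← tsum_mul_left]
    exact tsum_congr fun k => by ring
  obtain rfl : C = spectralCovMatrix e ξ η := by
    ext δ i j
    rw [hC, hPt, hr, spectralCovMatrix_apply]
    exact tsum_congr fun p => by simp only [e, ξ, η, ω, squareCorners]; ring_nf
  obtain ⟨k₁, l₁, hk₁, hl₁, ha₁⟩ := hnz
  have hω : 0 < ω := by positivity
  have hk₁' : (0 : ℝ) < k₁ := by exact_mod_cast hk₁
  have hl₁' : (0 : ℝ) < l₁ := by exact_mod_cast hl₁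
  have hpos {p q : ℕ} (hpq : p + q ≤ 5) : 0 < spectralMoment e ξ η p q :=
    spectralMoment_pos he (hm p q hpq) (i := (k₁, l₁)) (by simp only [e, ξ, η]; positivity)
  exact spectralCovMatrix_asymptotics he (hm.mono (by norm_num)) (hpos (by norm_num))
    (hpos (by norm_num)) (hpos (by norm_num))
end
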